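/- arXiv:2302.00970 — 2 statements merged into one kernel-verified Lean document; each statement's English description precedes it below -/
import Mathlib

section
/- Let q ≥ 2 and let μ_q := {ζ ∈ ℂ : ζ^q = 1}. For i ∈ {1,2,3} and ζ ∈ μ_q, define the linear form ℓ_{i,ζ} on ℂ^4 by ℓ_{i,ζ}(z_1,z_2,z_3,z_4) = z_i − ζ·z_4. Let p ∈ ℂ^4 be a point such that for every i ∈ {1,2,3} it is not the case that p_i = 0 and p_4 = 0 (i.e., p lies outside the union of the cones over the three lines C_i = {z_i = z_4 = 0}). Then the family of those linear forms ℓ_{i,ζ} (i ∈ {1,2,3}, ζ ∈ μ_q) that vanish at p is linearly independent over ℂ. -/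
/-!
Reading off the coefficients of the variables `z_1, z_2, z_3` sends `z_i − ζ z_4` to the `i`-th
unit vector, so a family of such forms is independent as soon as no two of them share the
index `i`. Among the forms vanishing at `p` they cannot: `p_i = ζ p_4` with `p_4 ≠ 0`
(otherwise `p_i = p_4 = 0`) determines `ζ`.
-/

open MvPolynomial

namespace MvPolynomial

variable {R σ ι : Type*}

noncomputable def linearCoeffs [CommSemiring R] (f : ι → σ) : MvPolynomial σ R →ₗ[R] ι → R :=
  LinearMap.pi fun i => lcoeff R (Finsupp.single (f i) 1)

theorem linearCoeffs_X_sub_C_mul_X [CommRing R] [DecidableEq ι] {f : ι → σ}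
    (hf : Function.Injective f) {k : σ} (hk : ∀ i, f i ≠ k) (i : ι) (c : R) :
    linearCoeffs f (X (f i) - C c * X k) = Pi.single i 1 := by
  classical
  funext j
  have hkj : Finsupp.single k 1 ≠ Finsupp.single (f j) 1 :=
    fun h => hk j ((Finsupp.single_left_inj one_ne_zero).mp h).symm
  have hij : Finsupp.single (f i) 1 = Finsupp.single (f j) 1 ↔ j = i := by
    rw [Finsupp.single_left_inj one_ne_zero, hf.eq_iff, eq_comm]
  simp [linearCoeffs, coeff_sub, coeff_C_mul, coeff_X, hkj, hij, Pi.single_apply]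

theorem linearIndependent_X_sub_C_mul_X [CommRing R] {f : ι → σ} (hf : Function.Injective f)
    {k : σ} (hk : ∀ i, f i ≠ k) {κ : Type*} (v : κ → ι × R)
    (hv : Function.Injective fun s => (v s).1) :
    LinearIndependent R fun s => X (f (v s).1) - C (v s).2 * X k := by
  classical
  apply LinearIndependent.of_comp (linearCoeffs f)
  have hunit : (linearCoeffs f ∘ fun s => X (f (v s).1) - C (v s).2 * X k) =
      (fun i => Pi.single i (1 : R)) ∘ fun s => (v s).1 := by
    funext s
    exact linearCoeffs_X_sub_C_mul_X hf hk (v s).1 (v s).2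
  rw [hunit]
  exact (Pi.linearIndependent_single_one ι R).comp _ hv

theorem eq_of_eval_X_sub_C_mul_X_eq_zero [CommRing R] [IsDomain R] {p : σ → R} {j k : σ}
    (hp : ¬ (p j = 0 ∧ p k = 0)) {c c' : R} (hc : eval p (X j - C c * X k) = 0)
    (hc' : eval p (X j - C c' * X k) = 0) : c = c' := by
  simp only [eval_sub, eval_mul, eval_C, eval_X, sub_eq_zero] at hc hc'
  have hpk : p k ≠ 0 := fun h0 => hp ⟨by rw [hc, h0, mul_zero], h0⟩
  exact mul_right_cancel₀ hpk (hc.symm.trans hc')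

end MvPolynomial

theorem linear_forms_vanishing_at_p_linearIndependent_general (q : ℕ)
    (p : Fin 4 → ℂ) (hp : ∀ i : Fin 3, ¬ (p i.castSucc = 0 ∧ p 3 = 0)) :
    LinearIndependent ℂ
      (fun s : {iζ : Fin 3 × ℂ //
          iζ.2 ^ q = 1 ∧ eval p (X iζ.1.castSucc - C iζ.2 * X 3) = 0} =>
        (X s.1.1.castSucc - C s.1.2 * X 3 : MvPolynomial (Fin 4) ℂ)) := by
  refine linearIndependent_X_sub_C_mul_X (Fin.castSucc_injective 3)
    (fun i => (Fin.castSucc_lt_last i).ne) Subtype.val ?_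
  rintro ⟨⟨i, ζ⟩, -, hζ⟩ ⟨⟨i', ζ'⟩, -, hζ'⟩ (rfl : i = i')
  obtain rfl : ζ = ζ' := eq_of_eval_X_sub_C_mul_X_eq_zero (hp i) hζ hζ'
  rfl

/-- Normal crossings of the union of the three hypersurfaces `{z_i^q = z_4^q}` in `ℂ^4`
outside the cones over the lines `C_i = {z_i = z_4 = 0}`: at any point `p` outside
`⋃ C_i`-cones, the linear forms `ℓ_{i,ζ} = z_i − ζ z_4` (with `ζ^q = 1`) vanishing at `p`
are linearly independent over `ℂ`. -/
theorem linear_forms_vanishing_at_p_linearIndependent (q : ℕ) (hq : 2 ≤ q)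
    (p : Fin 4 → ℂ) (hp : ∀ i : Fin 3, ¬ (p i.castSucc = 0 ∧ p 3 = 0)) :
    LinearIndependent ℂ
      (fun s : {iζ : Fin 3 × ℂ //
          iζ.2 ^ q = 1 ∧ eval p (X iζ.1.castSucc - C iζ.2 * X 3) = 0} =>
        (X s.1.1.castSucc - C s.1.2 * X 3 : MvPolynomial (Fin 4) ℂ)) :=
  linear_forms_vanishing_at_p_linearIndependent_general q p hp
end

section
/- Let q ≥ 2 and let μ_q := {ζ ∈ ℂ : ζ^q = 1}. Consider the following family of polynomials in ℂ[x,y,z]: the coordinates x and y, together with xyz − η for η ∈ μ_q, yz − ζ for ζ ∈ μ_q, and xz − ξ for ξ ∈ μ_q. Then for every point p ∈ ℂ^3, the gradients at p of those members of the family that vanish at p form a linearly independent family of vectors in ℂ^3. -/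
open MvPolynomial

/-!
Every member of the family lies in one of three slots: `x` or `xyz − η`, `y` or `yz − ζ`, and
`xz − ξ`, the slot `k` carrying the monomial `m_k = xyz, yz, xz`. At most one member of each slot
vanishes at `p`: a root of unity is nonzero, so `x = 0` (resp. `y = 0`) forces `m_k(p) = 0 ≠ η`,
and the root is pinned down as `m_k(p)`. The gradient of the vanishing member of slot `k` is
`e_k` if `m_k(p) = 0` and `∇m_k(p)` otherwise, and these three vectors are independent.
-/

/-- The family of polynomials `x, y, xyz − η (η^q = 1), yz − ζ (ζ^q = 1), xz − ξ (ξ^q = 1)`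
in `ℂ[x,y,z]`: the irreducible factors of the local equations of the divisor `X̃` in the
first chart of the second blow-up in the variant of Hironaka's example. -/
noncomputable def hironakaChart1Family (q : ℕ) :
    Fin 2 ⊕ Fin 3 × {ζ : ℂ // ζ ^ q = 1} → MvPolynomial (Fin 3) ℂ :=
  fun i => match i with
  | .inl j => if j = 0 then X 0 else X 1
  | .inr (j, ζ) =>
      if j = 0 then X 0 * X 1 * X 2 - C ζ.1
      else if j = 1 then X 1 * X 2 - C ζ.1
      else X 0 * X 2 - C ζ.1

section Gradient

variable {σ R : Type*} [CommRing R]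

noncomputable def gradientAt (p : σ → R) (f : MvPolynomial σ R) : σ → R :=
  fun j => eval p (pderiv j f)

variable (p : σ → R)

@[simp]
theorem gradientAt_X [DecidableEq σ] (i : σ) : gradientAt p (X i) = Pi.single i 1 := by
  ext j
  simp [gradientAt, pderiv_X, Pi.single_apply, eq_comm]

@[simp]
theorem gradientAt_sub_C (f : MvPolynomial σ R) (c : R) :
    gradientAt p (f - C c) = gradientAt p f := by
  ext j
  simp [gradientAt]

end Gradient

noncomputable def hironakaMonomial : Fin 3 → MvPolynomial (Fin 3) ℂ :=
  ![X 0 * X 1 * X 2, X 1 * X 2, X 0 * X 2]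

noncomputable def hironakaFrame (p : Fin 3 → ℂ) (k : Fin 3) : Fin 3 → ℂ :=
  if eval p (hironakaMonomial k) = 0 then Pi.single k 1 else gradientAt p (hironakaMonomial k)

def hironakaSlot {q : ℕ} : Fin 2 ⊕ Fin 3 × {ζ : ℂ // ζ ^ q = 1} → Fin 3 :=
  Sum.elim Fin.castSucc Prod.fst

section Family

variable {q : ℕ}

theorem hironakaChart1Family_inl (j : Fin 2) :
    hironakaChart1Family q (.inl j) = X j.castSucc := by
  fin_cases j <;> rfl

theorem hironakaChart1Family_inr (k : Fin 3) (ζ : {ζ : ℂ // ζ ^ q = 1}) :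
    hironakaChart1Family q (.inr (k, ζ)) = hironakaMonomial k - C ζ.1 := by
  fin_cases k <;> rfl

theorem eval_hironakaMonomial_castSucc_eq_zero {p : Fin 3 → ℂ} {j : Fin 2} (h : p j.castSucc = 0) :
    eval p (hironakaMonomial j.castSucc) = 0 := by
  fin_cases j <;> simp_all [hironakaMonomial]

theorem linearIndependent_hironakaFrame (p : Fin 3 → ℂ) :
    LinearIndependent ℂ (hironakaFrame p) := by
  suffices (Matrix.of (hironakaFrame p)).det ≠ 0 from
    Matrix.linearIndependent_rows_iff_isUnit.mpr ((Matrix.isUnit_iff_isUnit_det _).mpr this.isUnit)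
  rcases eq_or_ne (p 0) 0 with h0 | h0 <;> rcases eq_or_ne (p 1) 0 with h1 | h1 <;>
    rcases eq_or_ne (p 2) 0 with h2 | h2 <;>
    simp [hironakaFrame, hironakaMonomial, Matrix.det_fin_three, gradientAt, h0, h1, h2]
  -- in the generic case the determinant is `p 0 * p 1 * p 2 ^ 2`
  ring_nf
  simp [h0, h1, h2]

theorem eval_hironakaChart1Family_inr_eq_zero_iff {p : Fin 3 → ℂ} {k : Fin 3}
    {ζ : {ζ : ℂ // ζ ^ q = 1}} :
    eval p (hironakaChart1Family q (.inr (k, ζ))) = 0 ↔ eval p (hironakaMonomial k) = ζ := by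
  rw [hironakaChart1Family_inr, eval_sub, eval_C, sub_eq_zero]

variable (hq : q ≠ 0) {p : Fin 3 → ℂ}
include hq

theorem gradientAt_hironakaChart1Family {i : Fin 2 ⊕ Fin 3 × {ζ : ℂ // ζ ^ q = 1}}
    (hi : eval p (hironakaChart1Family q i) = 0) :
    gradientAt p (hironakaChart1Family q i) = hironakaFrame p (hironakaSlot i) := by
  rcases i with j | ⟨k, ζ⟩
  · rw [hironakaChart1Family_inl, eval_X] at hi
    simp [hironakaChart1Family_inl, hironakaFrame, hironakaSlot, eval_hironakaMonomial_castSucc_eq_zero hi]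
  · have hζ : (ζ : ℂ) ≠ 0 := (IsUnit.of_pow_eq_one ζ.2 hq).ne_zero
    rw [eval_hironakaChart1Family_inr_eq_zero_iff] at hi
    simp [hironakaFrame, hironakaSlot, hironakaChart1Family_inr, hi, hζ]

theorem hironakaSlot_injOn :
    Set.InjOn hironakaSlot {i | eval p (hironakaChart1Family q i) = 0} := by
  have hcoord : ∀ (j : Fin 2) (ζ : {ζ : ℂ // ζ ^ q = 1}),
      eval p (hironakaChart1Family q (.inl j)) = 0 →
      eval p (hironakaChart1Family q (.inr (j.castSucc, ζ))) ≠ 0 := by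
    intro j ζ hj hζ
    rw [hironakaChart1Family_inl, eval_X] at hj
    rw [eval_hironakaChart1Family_inr_eq_zero_iff, eval_hironakaMonomial_castSucc_eq_zero hj] at hζ
    exact (IsUnit.of_pow_eq_one ζ.2 hq).ne_zero hζ.symm
  rintro (j | ⟨k, ζ⟩) hi (j' | ⟨k', ζ'⟩) hi' h <;>
    simp only [hironakaSlot, Sum.elim_inl, Sum.elim_inr] at h
  · rw [Fin.castSucc_inj.mp h]
  · exact absurd hi' (h ▸ hcoord j ζ' hi)
  · exact absurd hi (h ▸ hcoord j' ζ hi')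
  · subst h
    rw [Set.mem_ofPred_eq, eval_hironakaChart1Family_inr_eq_zero_iff] at hi hi'
    rw [Subtype.ext (hi.symm.trans hi')]

end Family

/-- At every point `p ∈ ℂ^3`, the gradients of those members of the family
`x, y, xyz − η, yz − ζ, xz − ξ` (with `η, ζ, ξ` ranging over the `q`-th roots of unity)
that vanish at `p` are linearly independent over `ℂ`: the divisor `X̃` has normal
crossings throughout this chart. -/
theorem hironaka_chart1_normal_crossings (q : ℕ) (hq : 2 ≤ q) (p : Fin 3 → ℂ) :
    LinearIndependent ℂ
      (fun s : {i : Fin 2 ⊕ Fin 3 × {ζ : ℂ // ζ ^ q = 1} //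
          eval p (hironakaChart1Family q i) = 0} =>
        fun j : Fin 3 => eval p (pderiv j (hironakaChart1Family q s.1))) := by
  have hq0 : q ≠ 0 := by omega
  have hgrad : (fun s : {i // eval p (hironakaChart1Family q i) = 0} =>
      gradientAt p (hironakaChart1Family q s.1)) =
        hironakaFrame p ∘ (hironakaSlot ∘ Subtype.val) :=
    funext fun s => gradientAt_hironakaChart1Family hq0 s.2
  exact hgrad ▸ (linearIndependent_hironakaFrame p).comp _ (hironakaSlot_injOn hq0).injective
end
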